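/- arXiv:1407.4649 — 4 statements merged into one kernel-verified Lean document; each statement's English description precedes it below -/
import Mathlib

section
/- For every κ > 0 and every x > 0 one has g(κx) = κ^(k+3/2) g_κ(x); that is, the change of variables η ↦ κη in the defining integral of g yields the rescaled relation ρ(r) = κ^(1+2a) ρ̄_κ(s) for the mass–energy density. -/
/-!
Substituting `η = κ u` in the integral defining `g (κ x)` turns the upper limit `1 - e^{-κx}`
into `x - κ F_κ(x)` and the factor `Φ η` into `κ^k Φ_κ(u)`. Under the square root,
`e^{2κx} (1 - κu)² - 1 = e^{2κx} κ (2(x - u) + κ G_κ(x, u))`, so the root contributes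
`e^{κx} √κ`. Collecting `κ` (Jacobian) `· √κ · κ^k = κ^{k+3/2}` and `e^{3κx} e^{κx} = e^{4κx}`
gives the claim.
-/

open Real MeasureTheory

lemma mul_sub_mul_exp_neg_sub_one_add_div_sq {κ : ℝ} (hκ : κ ≠ 0) (x : ℝ) :
    κ * (x - κ * ((exp (-(κ * x)) - 1 + κ * x) / κ ^ 2)) = 1 - exp (-(κ * x)) := by
  field_simp
  ring

lemma exp_two_mul_mul_one_sub_sq_sub_one {κ : ℝ} (hκ : κ ≠ 0) (x u : ℝ) :
    exp (2 * (κ * x)) * (1 - κ * u) ^ 2 - 1 =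
      exp (κ * x) ^ 2 * κ *
        (2 * (x - u) + κ * (u ^ 2 - (exp (-(κ * (2 * x))) - 1 + κ * (2 * x)) / κ ^ 2)) := by
  have hexp : exp (-(κ * (2 * x))) = (exp (κ * x) ^ 2)⁻¹ := by
    rw [← exp_nat_mul, ← exp_neg]
    ring_nf
  rw [hexp, ← exp_nat_mul]
  field_simp
  ring_nf

lemma sqrt_exp_two_mul_mul_one_sub_sq_sub_one {κ : ℝ} (hκ : 0 < κ) (x u : ℝ) :
    √(exp (2 * (κ * x)) * (1 - κ * u) ^ 2 - 1) =
      exp (κ * x) * √κ *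
        √(2 * (x - u) + κ * (u ^ 2 - (exp (-(κ * (2 * x))) - 1 + κ * (2 * x)) / κ ^ 2)) := by
  rw [exp_two_mul_mul_one_sub_sq_sub_one hκ.ne', sqrt_mul (by positivity),
    sqrt_mul (by positivity), sqrt_sq (exp_pos _).le]

lemma intervalIntegral.integral_zero_mul_eq_of_comp_mul_left {f h : ℝ → ℝ} (κ c b : ℝ)
    (hfh : ∀ u, f (κ * u) = c * h u) :
    ∫ η in (0 : ℝ)..κ * b, f η = κ * c * ∫ u in (0 : ℝ)..b, h u := by
  calc ∫ η in (0 : ℝ)..κ * b, f η = κ * ∫ u in (0 : ℝ)..b, f (κ * u) := by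
        rw [intervalIntegral.mul_integral_comp_mul_left, mul_zero]
    _ = κ * c * ∫ u in (0 : ℝ)..b, h u := by
        simp only [hfh, intervalIntegral.integral_const_mul, mul_assoc]

lemma rpow_add_three_halves {κ : ℝ} (hκ : 0 < κ) (k : ℝ) :
    κ ^ (k + 3 / 2) = κ * √κ * κ ^ k := by
  rw [rpow_add hκ, sqrt_eq_rpow, show (3 / 2 : ℝ) = 1 + 1 / 2 by norm_num, rpow_add hκ,
    rpow_one]
  ring

theorem stmt_8_general
    (Φ : ℝ → ℝ)
    (k : ℝ)
    (g : ℝ → ℝ)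
    (hg : ∀ y > (0:ℝ), g y = 4 * π * Real.exp (3*y) *
      ∫ η in (0:ℝ)..(1 - Real.exp (-y)),
        Φ η * (1-η)^2 * (Real.exp (2*y)*(1-η)^2 - 1) ^ ((1:ℝ)/2))
    (F : ℝ → ℝ → ℝ) (G : ℝ → ℝ → ℝ → ℝ) (Φκ : ℝ → ℝ → ℝ)
    (hF : ∀ κ > (0:ℝ), ∀ x, F κ x = (Real.exp (-(κ*x)) - 1 + κ*x) / κ^2)
    (hG : ∀ κ x η, G κ x η = η^2 - F κ (2*x))
    (hΦκ : ∀ κ > (0:ℝ), ∀ η, Φκ κ η = κ ^ (-k) * Φ (κ*η))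
    (gκ : ℝ → ℝ → ℝ)
    (hgκ : ∀ κ > (0:ℝ), ∀ x > (0:ℝ), gκ κ x =
      4 * π * Real.exp (4*κ*x) *
        ∫ η in (0:ℝ)..(x - κ * F κ x),
          Φκ κ η * (1 - κ*η)^2 * (2*(x-η) + κ * G κ x η) ^ ((1:ℝ)/2)) :
    ∀ κ > (0:ℝ), ∀ x > (0:ℝ), g (κ*x) = κ ^ (k + 3/2) * gκ κ x := by
  intro κ hκ x hx
  have hlimit : 1 - exp (-(κ * x)) = κ * (x - κ * F κ x) := by
    rw [hF κ hκ x, mul_sub_mul_exp_neg_sub_one_add_div_sq hκ.ne']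
  have hintegrand : ∀ u, Φ (κ * u) * (1 - κ * u) ^ 2 * √(exp (2 * (κ * x)) * (1 - κ * u) ^ 2 - 1)
      = exp (κ * x) * √κ * κ ^ k *
        (Φκ κ u * (1 - κ * u) ^ 2 * √(2 * (x - u) + κ * G κ x u)) := by
    intro u
    have hΦ : Φ (κ * u) = κ ^ k * Φκ κ u := by
      rw [hΦκ κ hκ u, ← mul_assoc, ← rpow_add hκ, add_neg_cancel, rpow_zero, one_mul]
    rw [hΦ, hG, hF κ hκ, sqrt_exp_two_mul_mul_one_sub_sq_sub_one hκ]
    ring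
  have hexp : exp (4 * κ * x) = exp (3 * (κ * x)) * exp (κ * x) := by
    rw [← exp_add]
    ring_nf
  rw [hg _ (mul_pos hκ hx), hgκ κ hκ x hx]
  simp only [← sqrt_eq_rpow]
  rw [hlimit, intervalIntegral.integral_zero_mul_eq_of_comp_mul_left _ _ _ hintegrand, hexp,
    rpow_add_three_halves hκ]
  ring

theorem stmt_8
    (Φ : ℝ → ℝ) (hΦmeas : Measurable Φ) (hΦnn : ∀ η, 0 ≤ Φ η)
    (hΦneg : ∀ η < (0:ℝ), Φ η = 0)
    (C k δ C' a : ℝ) (hC : 0 < C) (hk0 : 0 < k) (hk1 : k < 3/2)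
    (hδ0 : 0 < δ) (hδ1 : δ ≤ 1/2) (hC' : 0 < C') (ha : a = (k + 1/2)/2)
    (hΦtaylor : ∀ η ∈ Set.Icc (0:ℝ) 1, |Φ η - C * η ^ k| ≤ C' * η ^ (k + δ))
    (g : ℝ → ℝ)
    (hg : ∀ y > (0:ℝ), g y = 4 * π * Real.exp (3*y) *
      ∫ η in (0:ℝ)..(1 - Real.exp (-y)),
        Φ η * (1-η)^2 * (Real.exp (2*y)*(1-η)^2 - 1) ^ ((1:ℝ)/2))
    (hgneg : ∀ y ≤ (0:ℝ), g y = 0)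
    (F : ℝ → ℝ → ℝ) (G : ℝ → ℝ → ℝ → ℝ) (Φκ : ℝ → ℝ → ℝ)
    (hF : ∀ κ > (0:ℝ), ∀ x, F κ x = (Real.exp (-(κ*x)) - 1 + κ*x) / κ^2)
    (hG : ∀ κ x η, G κ x η = η^2 - F κ (2*x))
    (hΦκ : ∀ κ > (0:ℝ), ∀ η, Φκ κ η = κ ^ (-k) * Φ (κ*η))
    (gκ : ℝ → ℝ → ℝ)
    (hgκ : ∀ κ > (0:ℝ), ∀ x > (0:ℝ), gκ κ x =
      4 * π * Real.exp (4*κ*x) *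
        ∫ η in (0:ℝ)..(x - κ * F κ x),
          Φκ κ η * (1 - κ*η)^2 * (2*(x-η) + κ * G κ x η) ^ ((1:ℝ)/2))
    (hgκ0 : ∀ κ > (0:ℝ), ∀ x ≤ (0:ℝ), gκ κ x = 0) :
    ∀ κ > (0:ℝ), ∀ x > (0:ℝ), g (κ*x) = κ ^ (k + 3/2) * gκ κ x :=
  stmt_8_general Φ k g hg F G Φκ hF hG hΦκ gκ hgκ
end

section
/- For every κ > 0 and every x > 0 one has h(κx) = κ^(k+5/2) h_κ(x); that is, the change of variables η ↦ κη in the defining integral of h yields the rescaled relation p(r) = κ^(2+2a) p̄_κ(s) for the radial pressure. -/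
open Real MeasureTheory

/-!
Substitute `η = κ ζ` in the integral defining `h (κ x)`. The upper limit `1 - e^{-κx}` becomes
`(1 - e^{-κx}) / κ = x - κ F_κ(x)`, and since
`2 (x - ζ) + κ G_κ(x, ζ) = ((1 - κζ)² - e^{-2κx}) / κ = e^{-2κx} (e^{2κx} (1 - κζ)² - 1) / κ`,
the integrand of `h_κ` is `κ^{-k-3/2} e^{-3κx}` times that of `h`. With `dη = κ dζ` the powers of
`κ` collect to `κ^{-(k+5/2)}`, and `e^{4κx} e^{-3κx} = e^{κx}`.
-/

noncomputable def rescaledF (κ x : ℝ) : ℝ := (exp (-(κ * x)) - 1 + κ * x) / κ ^ 2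

lemma sub_mul_rescaledF {κ : ℝ} (hκ : κ ≠ 0) (x : ℝ) :
    x - κ * rescaledF κ x = (1 - exp (-(κ * x))) / κ := by
  unfold rescaledF
  field_simp
  ring

lemma two_mul_sub_add_mul_sub_rescaledF {κ : ℝ} (hκ : κ ≠ 0) (x η : ℝ) :
    2 * (x - η) + κ * (η ^ 2 - rescaledF κ (2 * x)) =
      exp (-(2 * (κ * x))) * (exp (2 * (κ * x)) * (1 - κ * η) ^ 2 - 1) / κ := by
  have hexp : exp (-(2 * x * κ)) * exp (2 * x * κ) = 1 := by rw [← exp_add]; simp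
  unfold rescaledF
  field_simp
  linear_combination -(1 - η * κ) ^ 2 * hexp

lemma one_le_exp_two_mul_mul_one_sub_sq {y s : ℝ} (hs : s ≤ 1 - exp (-y)) :
    1 ≤ exp (2 * y) * (1 - s) ^ 2 := by
  have hinv : exp y * exp (-y) = 1 := by rw [← exp_add]; simp
  have h1 : 1 ≤ exp y * (1 - s) := by
    rw [← hinv]; exact mul_le_mul_of_nonneg_left (by linarith) (exp_pos y).le
  calc (1 : ℝ) ≤ (exp y * (1 - s)) ^ 2 := one_le_pow₀ h1
    _ = exp (2 * y) * (1 - s) ^ 2 := by rw [mul_pow, ← exp_nat_mul]; norm_num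

lemma exp_neg_two_mul_mul_div_rpow_three_halves {κ b : ℝ} (hκ : 0 < κ) (hb : 0 ≤ b) (y : ℝ) :
    (exp (-(2 * y)) * b / κ) ^ (3 / 2 : ℝ) =
      exp (-(3 * y)) / κ ^ (3 / 2 : ℝ) * b ^ (3 / 2 : ℝ) := by
  rw [div_rpow (by positivity) hκ.le, mul_rpow (exp_pos _).le hb, ← exp_mul]
  ring_nf

lemma rpow_add_five_halves_mul_rpow_neg_div {κ : ℝ} (hκ : 0 < κ) (k : ℝ) :
    κ ^ (k + 5 / 2) * (κ ^ (-k) / κ ^ (3 / 2 : ℝ) * κ⁻¹) = 1 := by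
  rw [← rpow_neg_one, div_eq_mul_inv (κ ^ (-k)), ← rpow_neg hκ.le, ← rpow_add hκ, ← rpow_add hκ,
    ← rpow_add hκ]
  ring_nf
  exact rpow_zero κ

lemma rescaled_integrand_eq (Φ : ℝ → ℝ) (k : ℝ) {κ x η : ℝ} (hκ : 0 < κ)
    (hη : κ * η ≤ 1 - exp (-(κ * x))) :
    κ ^ (-k) * Φ (κ * η) * (2 * (x - η) + κ * (η ^ 2 - rescaledF κ (2 * x))) ^ (3 / 2 : ℝ) =
      κ ^ (-k) * exp (-(3 * (κ * x))) / κ ^ (3 / 2 : ℝ) *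
        (Φ (κ * η) * (exp (2 * (κ * x)) * (1 - κ * η) ^ 2 - 1) ^ (3 / 2 : ℝ)) := by
  have hbase := one_le_exp_two_mul_mul_one_sub_sq hη
  rw [two_mul_sub_add_mul_sub_rescaledF hκ.ne',
    exp_neg_two_mul_mul_div_rpow_three_halves hκ (by linarith)]
  ring

lemma integral_rescaled (Φ : ℝ → ℝ) (k : ℝ) {κ x : ℝ} (hκ : 0 < κ) (hx : 0 ≤ x) :
    κ ^ (k + 5 / 2) * ∫ η in 0..x - κ * rescaledF κ x,
        κ ^ (-k) * Φ (κ * η) * (2 * (x - η) + κ * (η ^ 2 - rescaledF κ (2 * x))) ^ (3 / 2 : ℝ) =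
      exp (-(3 * (κ * x))) *
        ∫ η in 0..1 - exp (-(κ * x)), Φ η * (exp (2 * (κ * x)) * (1 - η) ^ 2 - 1) ^ (3 / 2 : ℝ) := by
  set f := fun η => Φ η * (exp (2 * (κ * x)) * (1 - η) ^ 2 - 1) ^ (3 / 2 : ℝ)
  have hupper : κ * ((1 - exp (-(κ * x))) / κ) = 1 - exp (-(κ * x)) := mul_div_cancel₀ _ hκ.ne'
  have hinteg : Set.EqOn (fun η => κ ^ (-k) * Φ (κ * η) *
        (2 * (x - η) + κ * (η ^ 2 - rescaledF κ (2 * x))) ^ (3 / 2 : ℝ))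
      (fun η => κ ^ (-k) * exp (-(3 * (κ * x))) / κ ^ (3 / 2 : ℝ) * f (κ * η))
      (Set.uIcc 0 (x - κ * rescaledF κ x)) := by
    intro η hη
    have hE : exp (-(κ * x)) ≤ 1 := exp_le_one_iff.mpr (by nlinarith)
    rw [sub_mul_rescaledF hκ.ne', Set.uIcc_of_le (div_nonneg (by linarith) hκ.le)] at hη
    refine rescaled_integrand_eq Φ k hκ ?_
    rw [← hupper]
    exact mul_le_mul_of_nonneg_left hη.2 hκ.le
  rw [intervalIntegral.integral_congr hinteg, intervalIntegral.integral_const_mul,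
    intervalIntegral.integral_comp_mul_left f hκ.ne', sub_mul_rescaledF hκ.ne', hupper, mul_zero,
    smul_eq_mul]
  linear_combination (exp (-(3 * (κ * x))) * ∫ η in 0..1 - exp (-(κ * x)), f η) *
    rpow_add_five_halves_mul_rpow_neg_div hκ k

theorem stmt_9_general
    (Φ : ℝ → ℝ)
    (k : ℝ)
    (h : ℝ → ℝ)
    (hh : ∀ y > (0:ℝ), h y = 4 * π / 3 * Real.exp y *
      ∫ η in (0:ℝ)..(1 - Real.exp (-y)),
        Φ η * (Real.exp (2*y)*(1-η)^2 - 1) ^ ((3:ℝ)/2))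
    (F : ℝ → ℝ → ℝ) (G : ℝ → ℝ → ℝ → ℝ) (Φκ : ℝ → ℝ → ℝ)
    (hF : ∀ κ > (0:ℝ), ∀ x, F κ x = (Real.exp (-(κ*x)) - 1 + κ*x) / κ^2)
    (hG : ∀ κ x η, G κ x η = η^2 - F κ (2*x))
    (hΦκ : ∀ κ > (0:ℝ), ∀ η, Φκ κ η = κ ^ (-k) * Φ (κ*η))
    (hκfun : ℝ → ℝ → ℝ)
    (hhκ : ∀ κ > (0:ℝ), ∀ x > (0:ℝ), hκfun κ x =
      4 * π / 3 * Real.exp (4*κ*x) *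
        ∫ η in (0:ℝ)..(x - κ * F κ x),
          Φκ κ η * (2*(x-η) + κ * G κ x η) ^ ((3:ℝ)/2)) :
    ∀ κ > (0:ℝ), ∀ x > (0:ℝ), h (κ*x) = κ ^ (k + 5/2) * hκfun κ x := by
  intro κ hκ x hx
  have hFκ : F κ = rescaledF κ := funext (hF κ hκ)
  have hexp : exp (4 * κ * x) * exp (-(3 * (κ * x))) = exp (κ * x) := by
    rw [← exp_add]; ring_nf
  rw [hh (κ * x) (mul_pos hκ hx), hhκ κ hκ x hx, mul_left_comm (κ ^ (k + 5 / 2))]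
  simp only [hG, hFκ, hΦκ κ hκ]
  rw [integral_rescaled Φ k hκ hx.le, ← hexp]
  ring

theorem stmt_9
    (Φ : ℝ → ℝ) (hΦmeas : Measurable Φ) (hΦnn : ∀ η, 0 ≤ Φ η)
    (hΦneg : ∀ η < (0:ℝ), Φ η = 0)
    (C k δ C' a : ℝ) (hC : 0 < C) (hk0 : 0 < k) (hk1 : k < 3/2)
    (hδ0 : 0 < δ) (hδ1 : δ ≤ 1/2) (hC' : 0 < C') (ha : a = (k + 1/2)/2)
    (hΦtaylor : ∀ η ∈ Set.Icc (0:ℝ) 1, |Φ η - C * η ^ k| ≤ C' * η ^ (k + δ))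
    (h : ℝ → ℝ)
    (hh : ∀ y > (0:ℝ), h y = 4 * π / 3 * Real.exp y *
      ∫ η in (0:ℝ)..(1 - Real.exp (-y)),
        Φ η * (Real.exp (2*y)*(1-η)^2 - 1) ^ ((3:ℝ)/2))
    (hhneg : ∀ y ≤ (0:ℝ), h y = 0)
    (F : ℝ → ℝ → ℝ) (G : ℝ → ℝ → ℝ → ℝ) (Φκ : ℝ → ℝ → ℝ)
    (hF : ∀ κ > (0:ℝ), ∀ x, F κ x = (Real.exp (-(κ*x)) - 1 + κ*x) / κ^2)
    (hG : ∀ κ x η, G κ x η = η^2 - F κ (2*x))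
    (hΦκ : ∀ κ > (0:ℝ), ∀ η, Φκ κ η = κ ^ (-k) * Φ (κ*η))
    (hκfun : ℝ → ℝ → ℝ)
    (hhκ : ∀ κ > (0:ℝ), ∀ x > (0:ℝ), hκfun κ x =
      4 * π / 3 * Real.exp (4*κ*x) *
        ∫ η in (0:ℝ)..(x - κ * F κ x),
          Φκ κ η * (2*(x-η) + κ * G κ x η) ^ ((3:ℝ)/2))
    (hhκ0 : ∀ κ > (0:ℝ), ∀ x ≤ (0:ℝ), hκfun κ x = 0) :
    ∀ κ > (0:ℝ), ∀ x > (0:ℝ), h (κ*x) = κ ^ (k + 5/2) * hκfun κ x :=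
  stmt_9_general Φ k h hh F G Φκ hF hG hΦκ hκfun hhκ
end

section
/- There exist constants C₂ > 0 and κ₀ ∈ (0,1] such that for all κ ∈ (0,κ₀] and all x ≤ 1 one has |g_κ(x) − g₀(x)| ≤ C₂ κ^δ. -/
/-!
Fix `0 < κ ≤ 1` and `0 < x ≤ 1`. Since `0 ≤ F_κ(y) ≤ y²`, the upper limit `b = x - κ F_κ(x)` of
the `g_κ` integral lies in `[x - κ, x]`, and on `(0, b]` the Taylor hypothesis, rescaled, gives
`|Φ_κ(η) - C η^k| ≤ C' κ^δ`. The factor `(1 - κη)²` is `1 + O(κ)`, and the square roots differ by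
`O(√κ)` because `|√a - √b| ≤ √|a - b|`; as `δ ≤ 1/2` the integrands of `g_κ` and `g₀` therefore
differ by `O(κ^δ)` uniformly. The tail `∫_b^x` of `g₀` and the factor `e^{4κx} - 1` are `O(κ)`.
-/

open Real MeasureTheory Set

theorem abs_mul_sub_mul_le {α : Type*} [Ring α] [LinearOrder α] [IsStrictOrderedRing α]
    (a b c d : α) : |a * b - c * d| ≤ |a - c| * |b| + |c| * |b - d| := by
  calc |a * b - c * d| = |(a - c) * b + c * (b - d)| := by noncomm_ring
    _ ≤ |a - c| * |b| + |c| * |b - d| := by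
      rw [← abs_mul, ← abs_mul]; exact abs_add_le _ _

theorem Real.abs_sqrt_sub_sqrt_le (a b : ℝ) : |√a - √b| ≤ √|a - b| := by
  have key : ∀ u v : ℝ, √u ≤ √v + √|u - v| := by
    intro u v
    rw [sqrt_le_left (by positivity)]
    rcases le_total 0 v with hv | hv
    · nlinarith [sq_sqrt hv, sq_sqrt (abs_nonneg (u - v)), le_abs_self (u - v),
        mul_nonneg (sqrt_nonneg v) (sqrt_nonneg |u - v|)]
    · rw [sqrt_eq_zero'.2 hv, zero_add, sq_sqrt (abs_nonneg _)]
      linarith [le_abs_self (u - v)]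
  rw [abs_sub_le_iff]
  constructor
  · linarith [key a b]
  · rw [abs_sub_comm]; linarith [key b a]

theorem Real.abs_exp_sub_one_le_mul_exp {t : ℝ} (ht : 0 ≤ t) : |exp t - 1| ≤ t * exp t := by
  have h := mul_le_mul_of_nonneg_right (one_sub_le_exp_neg t) (exp_pos t).le
  rw [← exp_add, neg_add_cancel, exp_zero] at h
  rw [abs_of_nonneg (by linarith [one_le_exp ht])]
  linarith

theorem Real.exp_neg_sub_one_add_le_sq {t : ℝ} (ht : 0 ≤ t) : exp (-t) - 1 + t ≤ t ^ 2 := by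
  have h := mul_le_mul_of_nonneg_left (add_one_le_exp t) (exp_pos (-t)).le
  rw [← exp_add, neg_add_cancel, exp_zero] at h
  nlinarith [one_sub_le_exp_neg t]

theorem exp_neg_mul_sub_one_add_div_sq_mem_Icc {κ y : ℝ} (hκ : 0 < κ) (hy : 0 ≤ y) :
    (exp (-(κ * y)) - 1 + κ * y) / κ ^ 2 ∈ Icc 0 (y ^ 2) := by
  constructor
  · exact div_nonneg (by linarith [one_sub_le_exp_neg (κ * y)]) (sq_nonneg κ)
  · rw [div_le_iff₀ (by positivity)]
    linarith [exp_neg_sub_one_add_le_sq (mul_nonneg hκ.le hy)]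

theorem abs_rescale_sub_mul_rpow_le {Φ : ℝ → ℝ} {C k δ C' κ η : ℝ}
    (hΦ : ∀ η ∈ Icc (0:ℝ) 1, |Φ η - C * η ^ k| ≤ C' * η ^ (k + δ))
    (hκ : 0 < κ) (hη : 0 ≤ η) (hκη : κ * η ≤ 1) :
    |κ ^ (-k) * Φ (κ * η) - C * η ^ k| ≤ C' * κ ^ δ * η ^ (k + δ) := by
  have hscale : ∀ p, κ ^ (-k) * (κ * η) ^ (k + p) = κ ^ p * η ^ (k + p) := fun p => by
    rw [mul_rpow hκ.le hη, ← mul_assoc, ← rpow_add hκ, neg_add_cancel_left]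
  have hk : κ ^ (-k) * (κ * η) ^ k = η ^ k := by simpa using hscale 0
  calc |κ ^ (-k) * Φ (κ * η) - C * η ^ k|
      = |κ ^ (-k) * (Φ (κ * η) - C * (κ * η) ^ k)| := by rw [mul_sub, ← hk]; ring_nf
    _ = κ ^ (-k) * |Φ (κ * η) - C * (κ * η) ^ k| := by
        rw [abs_mul, abs_of_pos (rpow_pos_of_pos hκ _)]
    _ ≤ κ ^ (-k) * (C' * (κ * η) ^ (k + δ)) := by
        gcongr; exact hΦ _ ⟨by positivity, hκη⟩
    _ = C' * κ ^ δ * η ^ (k + δ) := by rw [mul_left_comm, hscale, mul_assoc]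

theorem abs_sqrt_perturbed_sub_sqrt_le {κ x η F₂ : ℝ} (hκ : 0 < κ) (hη : η ∈ Ioc 0 x)
    (hx1 : x ≤ 1) (hF₂ : F₂ ∈ Icc 0 4) :
    |√(2 * (x - η) + κ * (η ^ 2 - F₂)) - √(2 * (x - η))| ≤ 2 * √κ := by
  obtain ⟨hη0, hηx⟩ := hη
  have hη2 : |η ^ 2 - F₂| ≤ 2 ^ 2 := by rw [abs_le]; constructor <;> nlinarith [hF₂.1, hF₂.2]
  calc _ ≤ √|2 * (x - η) + κ * (η ^ 2 - F₂) - 2 * (x - η)| := abs_sqrt_sub_sqrt_le _ _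
    _ ≤ √(2 ^ 2 * κ) := by
      gcongr
      rw [add_sub_cancel_left, abs_mul, abs_of_pos hκ, mul_comm]
      gcongr
    _ = 2 * √κ := by rw [sqrt_mul (by norm_num), sqrt_sq zero_le_two]

theorem abs_perturbed_integrand_sub_le {C C' k δ κ x η φ F₂ : ℝ} (hC : 0 ≤ C) (hk : 0 ≤ k)
    (hδ : δ ≤ 1 / 2) (hκ : 0 < κ) (hκ1 : κ ≤ 1) (hη : η ∈ Ioc 0 x) (hx1 : x ≤ 1)
    (hF₂ : F₂ ∈ Icc 0 4) (hφ : |φ - C * η ^ k| ≤ C' * κ ^ δ) :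
    |φ * (1 - κ * η) ^ 2 * √(2 * (x - η) + κ * (η ^ 2 - F₂)) - C * η ^ k * √(2 * (x - η))|
      ≤ (6 * C + 2 * C') * κ ^ δ := by
  obtain ⟨hη0, hηx⟩ := hη
  obtain ⟨hF₂0, hF₂4⟩ := hF₂
  set A := 2 * (x - η) + κ * (η ^ 2 - F₂)
  have hκη : κ * η ≤ 1 := by nlinarith
  have hκδ : κ ≤ κ ^ δ := self_le_rpow_of_le_one hκ.le hκ1 (by linarith)
  have hsqrtκ : √κ ≤ κ ^ δ := by
    rw [sqrt_eq_rpow]; exact rpow_le_rpow_of_exponent_ge hκ hκ1 hδ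
  have hηk : η ^ k ≤ 1 := rpow_le_one hη0.le (hηx.trans hx1) hk
  have hCηk : |C * η ^ k| ≤ C := by
    rw [abs_of_nonneg (by positivity)]; exact mul_le_of_le_one_right hC hηk
  have hquad : |(1 - κ * η) ^ 2 - 1| ≤ 2 * κ := by
    rw [abs_le]; constructor <;> nlinarith [mul_pos hκ hη0]
  have hsqrtA : √A ≤ 2 := by
    rw [sqrt_le_left zero_le_two]; nlinarith
  have hsqrt_diff : |√A - √(2 * (x - η))| ≤ 2 * κ ^ δ :=
    (abs_sqrt_perturbed_sub_sqrt_le hκ ⟨hη0, hηx⟩ hx1 ⟨hF₂0, hF₂4⟩).trans (by gcongr)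
  have hfront : |φ * (1 - κ * η) ^ 2 - C * η ^ k| ≤ C' * κ ^ δ + C * (2 * κ) :=
    calc |φ * (1 - κ * η) ^ 2 - C * η ^ k| = |φ * (1 - κ * η) ^ 2 - C * η ^ k * 1| := by
          rw [mul_one]
      _ ≤ |φ - C * η ^ k| * |(1 - κ * η) ^ 2| + |C * η ^ k| * |(1 - κ * η) ^ 2 - 1| :=
          abs_mul_sub_mul_le _ _ _ _
      _ ≤ C' * κ ^ δ * 1 + C * (2 * κ) := by
          have hsq : (1 - κ * η) ^ 2 ≤ 1 := by nlinarith [mul_pos hκ hη0]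
          rw [abs_of_nonneg (sq_nonneg (1 - κ * η))]
          exact add_le_add (mul_le_mul hφ hsq (sq_nonneg _) ((abs_nonneg _).trans hφ))
            (mul_le_mul hCηk hquad (abs_nonneg _) hC)
      _ = C' * κ ^ δ + C * (2 * κ) := by rw [mul_one]
  calc _ ≤ |φ * (1 - κ * η) ^ 2 - C * η ^ k| * |√A| + |C * η ^ k| * |√A - √(2 * (x - η))| :=
        abs_mul_sub_mul_le _ _ _ _
    _ ≤ (C' * κ ^ δ + C * (2 * κ)) * 2 + C * (2 * κ ^ δ) := by
        rw [abs_of_nonneg (sqrt_nonneg _)]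
        gcongr
        exact (abs_nonneg _).trans hfront
    _ ≤ (6 * C + 2 * C') * κ ^ δ := by nlinarith

theorem intervalIntegral.abs_integral_sub_integral_le_of_abs_sub_le {f g : ℝ → ℝ} {a b ε : ℝ}
    (hab : a ≤ b) (hf : AEStronglyMeasurable f) (hg : IntervalIntegrable g volume a b)
    (h : ∀ t ∈ Ioc a b, |f t - g t| ≤ ε) :
    |(∫ t in a..b, f t) - ∫ t in a..b, g t| ≤ ε * (b - a) := by
  have hf' : IntervalIntegrable f volume a b := by
    refine (hg.norm.add (intervalIntegrable_const (c := ε))).mono_fun' hf.restrict ?_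
    rw [Filter.EventuallyLE, uIoc_of_le hab, ae_restrict_iff' measurableSet_Ioc]
    refine ae_of_all _ fun t ht => ?_
    have := h t ht
    simp only [Real.norm_eq_abs]
    linarith [abs_sub_abs_le_abs_sub (f t) (g t)]
  rw [← intervalIntegral.integral_sub hf' hg]
  have := intervalIntegral.norm_integral_le_of_norm_le_const (f := fun t => f t - g t) (C := ε)
    (fun t ht => by rw [uIoc_of_le hab] at ht; exact h t ht)
  rwa [abs_of_nonneg (sub_nonneg.2 hab)] at this

theorem norm_mul_rpow_mul_sqrt_le {C k x η : ℝ} (hC : 0 ≤ C) (hk : 0 ≤ k) (hη : η ∈ Ioc 0 x)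
    (hx1 : x ≤ 1) : ‖C * η ^ k * √(2 * (x - η))‖ ≤ 2 * C := by
  obtain ⟨hη0, hηx⟩ := hη
  have hηk : η ^ k ≤ 1 := rpow_le_one hη0.le (hηx.trans hx1) hk
  have hsqrt : √(2 * (x - η)) ≤ 2 := by rw [sqrt_le_left zero_le_two]; nlinarith
  rw [norm_of_nonneg (by positivity)]
  calc C * η ^ k * √(2 * (x - η)) ≤ C * 1 * 2 := by gcongr
    _ = 2 * C := by ring

/-- `φ`, `a` and `F₂` stand for `Φ_κ`, `F_κ(x)` and `F_κ(2x)`. -/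
theorem abs_integral_perturbed_sub_integral_le {φ : ℝ → ℝ} {C C' k δ κ x a F₂ : ℝ}
    (hφ : Measurable φ) (hC : 0 ≤ C) (hC' : 0 ≤ C') (hk : 0 ≤ k) (hδ : δ ≤ 1 / 2) (hκ : 0 < κ)
    (hκ1 : κ ≤ 1) (hx : 0 ≤ x) (hx1 : x ≤ 1) (ha : a ∈ Icc 0 (x ^ 2)) (hF₂ : F₂ ∈ Icc 0 4)
    (hφC : ∀ η ∈ Ioc 0 x, |φ η - C * η ^ k| ≤ C' * κ ^ δ) :
    |(∫ η in (0:ℝ)..x - κ * a, φ η * (1 - κ * η) ^ 2 * √(2 * (x - η) + κ * (η ^ 2 - F₂))) -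
      ∫ η in (0:ℝ)..x, C * η ^ k * √(2 * (x - η))| ≤ (8 * C + 2 * C') * κ ^ δ := by
  obtain ⟨ha0, hax⟩ := ha
  set b := x - κ * a
  have hκa : κ * a ≤ κ * x ^ 2 := by gcongr
  have hx2 : x ^ 2 ≤ 1 := by nlinarith
  have hb0 : 0 ≤ b := by nlinarith
  have hbx : b ≤ x := by nlinarith
  have hxb : x - b ≤ κ := by nlinarith
  have hκδ : κ ≤ κ ^ δ := self_le_rpow_of_le_one hκ.le hκ1 (by linarith)
  have hf₀int : IntervalIntegrable (fun η => C * η ^ k * √(2 * (x - η))) volume 0 x :=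
    ((continuous_const.mul (continuous_rpow_const hk)).mul
      (continuous_const.mul (continuous_const.sub continuous_id)).sqrt).intervalIntegrable _ _
  have hbmem : b ∈ uIcc 0 x := mem_uIcc.2 (Or.inl ⟨hb0, hbx⟩)
  rw [← intervalIntegral.integral_add_adjacent_intervals
    (hf₀int.mono_set (uIcc_subset_uIcc left_mem_uIcc hbmem))
    (hf₀int.mono_set (uIcc_subset_uIcc hbmem right_mem_uIcc))]
  have hmain := intervalIntegral.abs_integral_sub_integral_le_of_abs_sub_le hb0 (by fun_prop)
    (hf₀int.mono_set (uIcc_subset_uIcc left_mem_uIcc hbmem)) fun η hη =>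
      abs_perturbed_integrand_sub_le hC hk hδ hκ hκ1 ⟨hη.1, hη.2.trans hbx⟩ hx1 hF₂
        (hφC η ⟨hη.1, hη.2.trans hbx⟩)
  have htail := intervalIntegral.norm_integral_le_of_norm_le_const (a := b) (b := x)
    fun η hη => norm_mul_rpow_mul_sqrt_le hC hk
      (by rw [uIoc_of_le hbx] at hη; exact ⟨hb0.trans_lt hη.1, hη.2⟩) hx1
  rw [sub_zero] at hmain
  rw [Real.norm_eq_abs, abs_of_nonneg (sub_nonneg.2 hbx)] at htail
  rw [sub_add_eq_sub_sub]
  calc _ ≤ _ := abs_sub _ _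
    _ ≤ (6 * C + 2 * C') * κ ^ δ * 1 + 2 * C * κ :=
        add_le_add (hmain.trans (by gcongr; exact hbx.trans hx1)) (htail.trans (by gcongr))
    _ ≤ (8 * C + 2 * C') * κ ^ δ := by nlinarith

theorem abs_exp_mul_integral_perturbed_sub_le {φ : ℝ → ℝ} {C C' k δ κ x a F₂ : ℝ}
    (hφ : Measurable φ) (hC : 0 ≤ C) (hC' : 0 ≤ C') (hk : 0 ≤ k) (hδ : δ ≤ 1 / 2) (hκ : 0 < κ)
    (hκ1 : κ ≤ 1) (hx : 0 ≤ x) (hx1 : x ≤ 1) (ha : a ∈ Icc 0 (x ^ 2)) (hF₂ : F₂ ∈ Icc 0 4)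
    (hφC : ∀ η ∈ Ioc 0 x, |φ η - C * η ^ k| ≤ C' * κ ^ δ) :
    |exp (4 * κ * x) *
        (∫ η in (0:ℝ)..x - κ * a, φ η * (1 - κ * η) ^ 2 * √(2 * (x - η) + κ * (η ^ 2 - F₂))) -
      √2 * ∫ η in (0:ℝ)..x, C * η ^ k * √(x - η)| ≤ 16 * exp 4 * (C + C') * κ ^ δ := by
  have hsqrt2 : √2 * ∫ η in (0:ℝ)..x, C * η ^ k * √(x - η)
      = ∫ η in (0:ℝ)..x, C * η ^ k * √(2 * (x - η)) := by
    rw [← intervalIntegral.integral_const_mul]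
    congr 1 with η
    rw [sqrt_mul zero_le_two]; ring
  have hg₀ : |∫ η in (0:ℝ)..x, C * η ^ k * √(2 * (x - η))| ≤ 2 * C := by
    refine (intervalIntegral.norm_integral_le_of_norm_le_const fun η hη =>
      norm_mul_rpow_mul_sqrt_le hC hk (by rwa [uIoc_of_le hx] at hη) hx1).trans ?_
    rw [sub_zero, abs_of_nonneg hx]; exact mul_le_of_le_one_right (by positivity) hx1
  have hE : exp (4 * κ * x) ≤ exp 4 := exp_le_exp.2 (by nlinarith)
  have hE1 : |exp (4 * κ * x) - 1| ≤ 4 * κ * exp 4 :=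
    (abs_exp_sub_one_le_mul_exp (by positivity)).trans
      (mul_le_mul (by nlinarith) hE (exp_pos _).le (by positivity))
  have hκδ : κ ≤ κ ^ δ := self_le_rpow_of_le_one hκ.le hκ1 (by linarith)
  rw [hsqrt2]
  set I := ∫ η in (0:ℝ)..x - κ * a, φ η * (1 - κ * η) ^ 2 * √(2 * (x - η) + κ * (η ^ 2 - F₂))
  set G := ∫ η in (0:ℝ)..x, C * η ^ k * √(2 * (x - η))
  calc |exp (4 * κ * x) * I - G| = |exp (4 * κ * x) * (I - G) + (exp (4 * κ * x) - 1) * G| := by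
        ring_nf
    _ ≤ |exp (4 * κ * x) * (I - G)| + |(exp (4 * κ * x) - 1) * G| := abs_add_le _ _
    _ = exp (4 * κ * x) * |I - G| + |exp (4 * κ * x) - 1| * |G| := by
        rw [abs_mul, abs_mul, abs_of_pos (exp_pos _)]
    _ ≤ exp 4 * ((8 * C + 2 * C') * κ ^ δ) + 4 * κ * exp 4 * (2 * C) := by
        gcongr
        exact abs_integral_perturbed_sub_integral_le hφ hC hC' hk hδ hκ hκ1 hx hx1 ha hF₂ hφC
    _ ≤ 16 * exp 4 * (C + C') * κ ^ δ := by
        have h1 : exp 4 * C * κ ≤ exp 4 * C * κ ^ δ := by gcongr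
        have h2 : 0 ≤ exp 4 * C' * κ ^ δ := by positivity
        linarith

theorem stmt_12_general
    (Φ : ℝ → ℝ) (hΦmeas : Measurable Φ)
    (C k δ C' : ℝ) (hC : 0 < C) (hk0 : 0 < k)
    (hδ0 : 0 < δ) (hδ1 : δ ≤ 1/2) (hC' : 0 < C')
    (hΦtaylor : ∀ η ∈ Set.Icc (0:ℝ) 1, |Φ η - C * η ^ k| ≤ C' * η ^ (k + δ))
    (F : ℝ → ℝ → ℝ) (G : ℝ → ℝ → ℝ → ℝ) (Φκ : ℝ → ℝ → ℝ) (Φ0 : ℝ → ℝ)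
    (hF : ∀ κ > (0:ℝ), ∀ x, F κ x = (Real.exp (-(κ*x)) - 1 + κ*x) / κ^2)
    (hG : ∀ κ x η, G κ x η = η^2 - F κ (2*x))
    (hΦκ : ∀ κ > (0:ℝ), ∀ η, Φκ κ η = κ ^ (-k) * Φ (κ*η))
    (hΦ0 : ∀ η, Φ0 η = C * η ^ k)
    (gκ : ℝ → ℝ → ℝ) (g0 : ℝ → ℝ)
    (hgκ : ∀ κ > (0:ℝ), ∀ x > (0:ℝ), gκ κ x =
      4 * π * Real.exp (4*κ*x) *
        ∫ η in (0:ℝ)..(x - κ * F κ x),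
          Φκ κ η * (1 - κ*η)^2 * (2*(x-η) + κ * G κ x η) ^ ((1:ℝ)/2))
    (hgκ0 : ∀ κ > (0:ℝ), ∀ x ≤ (0:ℝ), gκ κ x = 0)
    (hg0 : ∀ x > (0:ℝ), g0 x =
      4 * π * Real.sqrt 2 * ∫ η in (0:ℝ)..x, Φ0 η * (x - η) ^ ((1:ℝ)/2))
    (hg00 : ∀ x ≤ (0:ℝ), g0 x = 0) :
    ∃ C₂ > (0:ℝ), ∃ κ₀ > (0:ℝ), κ₀ ≤ 1 ∧
      ∀ κ, 0 < κ → κ ≤ κ₀ → ∀ x ≤ (1:ℝ), |gκ κ x - g0 x| ≤ C₂ * κ ^ δ := by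
  refine ⟨4 * π * (16 * exp 4 * (C + C')), by positivity, 1, one_pos, le_rfl,
    fun κ hκ hκ1 x hx1 => ?_⟩
  rcases le_or_gt x 0 with hx | hx
  · rw [hgκ0 κ hκ x hx, hg00 x hx, sub_zero, abs_zero]; positivity
  have hFmem : ∀ y, 0 ≤ y → F κ y ∈ Icc 0 (y ^ 2) := fun y hy => by
    rw [hF κ hκ]; exact exp_neg_mul_sub_one_add_div_sq_mem_Icc hκ hy
  have hF₂ : F κ (2 * x) ∈ Icc 0 4 := by
    obtain ⟨h0, h1⟩ := hFmem (2 * x) (by positivity)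
    exact ⟨h0, h1.trans (by nlinarith)⟩
  have hΦκC : ∀ η ∈ Ioc 0 x, |κ ^ (-k) * Φ (κ * η) - C * η ^ k| ≤ C' * κ ^ δ := by
    rintro η ⟨hη0, hηx⟩
    calc _ ≤ C' * κ ^ δ * η ^ (k + δ) :=
          abs_rescale_sub_mul_rpow_le hΦtaylor hκ hη0.le (by nlinarith)
      _ ≤ C' * κ ^ δ :=
          mul_le_of_le_one_right (by positivity) (rpow_le_one hη0.le (by linarith) (by linarith))
  have key := abs_exp_mul_integral_perturbed_sub_le (φ := fun η => κ ^ (-k) * Φ (κ * η))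
    (by fun_prop) hC.le hC'.le hk0.le hδ1 hκ hκ1 hx.le hx1 (hFmem x hx.le) hF₂ hΦκC
  rw [hgκ κ hκ x hx, hg0 x hx]
  simp only [hG, hΦκ κ hκ, hΦ0, ← sqrt_eq_rpow]
  rw [mul_assoc (4 * π), mul_assoc (4 * π), ← mul_sub, abs_mul, abs_of_pos (by positivity),
    mul_assoc (4 * π)]
  exact mul_le_mul_of_nonneg_left key (by positivity)

theorem stmt_12
    (Φ : ℝ → ℝ) (hΦmeas : Measurable Φ) (hΦnn : ∀ η, 0 ≤ Φ η)
    (hΦneg : ∀ η < (0:ℝ), Φ η = 0)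
    (C k δ C' : ℝ) (hC : 0 < C) (hk0 : 0 < k) (hk1 : k < 3/2)
    (hδ0 : 0 < δ) (hδ1 : δ ≤ 1/2) (hC' : 0 < C')
    (hΦtaylor : ∀ η ∈ Set.Icc (0:ℝ) 1, |Φ η - C * η ^ k| ≤ C' * η ^ (k + δ))
    (F : ℝ → ℝ → ℝ) (G : ℝ → ℝ → ℝ → ℝ) (Φκ : ℝ → ℝ → ℝ) (Φ0 : ℝ → ℝ)
    (hF : ∀ κ > (0:ℝ), ∀ x, F κ x = (Real.exp (-(κ*x)) - 1 + κ*x) / κ^2)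
    (hG : ∀ κ x η, G κ x η = η^2 - F κ (2*x))
    (hΦκ : ∀ κ > (0:ℝ), ∀ η, Φκ κ η = κ ^ (-k) * Φ (κ*η))
    (hΦ0 : ∀ η, Φ0 η = C * η ^ k)
    (gκ : ℝ → ℝ → ℝ) (g0 : ℝ → ℝ)
    (hgκ : ∀ κ > (0:ℝ), ∀ x > (0:ℝ), gκ κ x =
      4 * π * Real.exp (4*κ*x) *
        ∫ η in (0:ℝ)..(x - κ * F κ x),
          Φκ κ η * (1 - κ*η)^2 * (2*(x-η) + κ * G κ x η) ^ ((1:ℝ)/2))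
    (hgκ0 : ∀ κ > (0:ℝ), ∀ x ≤ (0:ℝ), gκ κ x = 0)
    (hg0 : ∀ x > (0:ℝ), g0 x =
      4 * π * Real.sqrt 2 * ∫ η in (0:ℝ)..x, Φ0 η * (x - η) ^ ((1:ℝ)/2))
    (hg00 : ∀ x ≤ (0:ℝ), g0 x = 0) :
    ∃ C₂ > (0:ℝ), ∃ κ₀ > (0:ℝ), κ₀ ≤ 1 ∧
      ∀ κ, 0 < κ → κ ≤ κ₀ → ∀ x ≤ (1:ℝ), |gκ κ x - g0 x| ≤ C₂ * κ ^ δ :=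
  stmt_12_general Φ hΦmeas C k δ C' hC hk0 hδ0 hδ1 hC' hΦtaylor F G Φκ Φ0 hF hG hΦκ hΦ0 gκ g0 hgκ
    hgκ0 hg0 hg00
end

section
/- There exists a constant C₁ > 0 such that for all κ ∈ (0,1] and all x ≤ 1 one has 0 ≤ g_κ(x) ≤ C₁ and 0 ≤ h_κ(x) ≤ C₁. -/
open Real MeasureTheory
set_option maxHeartbeats 1000000

theorem stmt_13
    (Φ : ℝ → ℝ) (hΦmeas : Measurable Φ) (hΦnn : ∀ η, 0 ≤ Φ η)
    (hΦneg : ∀ η < (0:ℝ), Φ η = 0)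
    (C k δ C' : ℝ) (hC : 0 < C) (hk0 : 0 < k) (hk1 : k < 3/2)
    (hδ0 : 0 < δ) (hC' : 0 < C')
    (hΦtaylor : ∀ η ∈ Set.Icc (0:ℝ) 1, |Φ η - C * η ^ k| ≤ C' * η ^ (k + δ))
    (F : ℝ → ℝ → ℝ) (G : ℝ → ℝ → ℝ → ℝ) (Φκ : ℝ → ℝ → ℝ)
    (hF : ∀ κ > (0:ℝ), ∀ x, F κ x = (Real.exp (-(κ*x)) - 1 + κ*x) / κ^2)
    (hG : ∀ κ x η, G κ x η = η^2 - F κ (2*x))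
    (hΦκ : ∀ κ > (0:ℝ), ∀ η, Φκ κ η = κ ^ (-k) * Φ (κ*η))
    (gκ hκ : ℝ → ℝ → ℝ)
    (hgκ : ∀ κ > (0:ℝ), ∀ x > (0:ℝ), gκ κ x =
      4 * π * Real.exp (4*κ*x) *
        ∫ η in (0:ℝ)..(x - κ * F κ x),
          Φκ κ η * (1 - κ*η)^2 * (2*(x-η) + κ * G κ x η) ^ ((1:ℝ)/2))
    (hgκ0 : ∀ κ > (0:ℝ), ∀ x ≤ (0:ℝ), gκ κ x = 0)
    (hhκ : ∀ κ > (0:ℝ), ∀ x > (0:ℝ), hκ κ x =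
      4 * π / 3 * Real.exp (4*κ*x) *
        ∫ η in (0:ℝ)..(x - κ * F κ x),
          Φκ κ η * (2*(x-η) + κ * G κ x η) ^ ((3:ℝ)/2))
    (hhκ0 : ∀ κ > (0:ℝ), ∀ x ≤ (0:ℝ), hκ κ x = 0) :
    ∃ C₁ > (0:ℝ), ∀ κ, 0 < κ → κ ≤ 1 → ∀ x ≤ (1:ℝ),
      0 ≤ gκ κ x ∧ gκ κ x ≤ C₁ ∧ 0 ≤ hκ κ x ∧ hκ κ x ≤ C₁ := by
  have h3pow : (0:ℝ) < (3:ℝ) ^ ((3:ℝ)/2) := Real.rpow_pos_of_pos (by norm_num) _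
  have hCC' : (0:ℝ) < C + C' := by linarith
  set M : ℝ := (C + C') * (3:ℝ) ^ ((3:ℝ)/2) with hM
  have hM0 : 0 < M := mul_pos hCC' h3pow
  set C₁ : ℝ := 4 * π * Real.exp 4 * M with hC₁
  have hC₁0 : 0 < C₁ := by
    have := Real.pi_pos
    have := Real.exp_pos (4:ℝ)
    positivity
  refine ⟨C₁, hC₁0, ?_⟩
  intro κ hκ0 hκ1 x hx1
  rcases le_or_gt x 0 with hx0 | hx0
  · rw [hgκ0 κ hκ0 x hx0, hhκ0 κ hκ0 x hx0]
    exact ⟨le_refl _, hC₁0.le, le_refl _, hC₁0.le⟩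
  -- main case 0 < x
  set E : ℝ := Real.exp (-(κ*x)) with hE
  have hE0 : 0 < E := Real.exp_pos _
  have hE1 : E ≤ 1 := by
    rw [hE, ← Real.exp_zero]
    exact Real.exp_le_exp.mpr (by nlinarith)
  have hFx := hF κ hκ0 x
  have hF2x := hF κ hκ0 (2*x)
  have hF1nn : 0 ≤ F κ x := by
    rw [hFx]
    apply div_nonneg _ (by positivity)
    nlinarith [Real.add_one_le_exp (-(κ*x))]
  have hF2nn : 0 ≤ F κ (2*x) := by
    rw [hF2x]
    apply div_nonneg _ (by positivity)
    nlinarith [Real.add_one_le_exp (-(κ*(2*x)))]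
  set b : ℝ := x - κ * F κ x with hbdef
  have hκb : κ * b = 1 - E := by
    rw [hbdef, hFx, hE]
    field_simp
    ring
  have hb0 : (0:ℝ) ≤ b := by nlinarith
  have hbx : b ≤ x := by nlinarith
  have hb1 : b ≤ 1 := hbx.trans hx1
  have hexp4 : Real.exp (4*κ*x) ≤ Real.exp 4 := Real.exp_le_exp.mpr (by nlinarith)
  have hE2 : Real.exp (-(κ*(2*x))) = E^2 := by
    rw [hE, sq, ← Real.exp_add]
    congr 1
    ring
  -- pointwise facts on Icc
  have hA0 : ∀ η ∈ Set.Icc (0:ℝ) b, 0 ≤ 2*(x-η) + κ * G κ x η := by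
    rintro η ⟨hη0, hηb⟩
    have hκη : κ * η ≤ 1 - E := by nlinarith [mul_le_mul_of_nonneg_left hηb hκ0.le]
    have hκA : κ * (2*(x-η) + κ * G κ x η) = (1 - κ*η)^2 - E^2 := by
      rw [hG, hF2x, hE2]
      field_simp
      ring
    have h1 : E ≤ 1 - κ*η := by linarith
    have h2 : E^2 ≤ (1 - κ*η)^2 := by nlinarith
    have h3 : 0 ≤ κ * (2*(x-η) + κ * G κ x η) := by rw [hκA]; linarith
    exact nonneg_of_mul_nonneg_right h3 hκ0
  have hA3 : ∀ η ∈ Set.Icc (0:ℝ) b, 2*(x-η) + κ * G κ x η ≤ 3 := by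
    rintro η ⟨hη0, hηb⟩
    have hη1 : η ≤ 1 := hηb.trans hb1
    rw [hG]
    nlinarith [mul_nonneg hκ0.le hF2nn, sq_nonneg η]
  have hΦκnn : ∀ η, 0 ≤ Φκ κ η := by
    intro η
    rw [hΦκ κ hκ0 η]
    exact mul_nonneg (Real.rpow_nonneg hκ0.le _) (hΦnn _)
  have hsq1 : ∀ η ∈ Set.Icc (0:ℝ) b, (1 - κ*η)^2 ≤ 1 := by
    rintro η ⟨hη0, hηb⟩
    have hκη : κ * η ≤ 1 - E := by nlinarith [mul_le_mul_of_nonneg_left hηb hκ0.le]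
    nlinarith [mul_nonneg hκ0.le hη0]
  have hΦb : ∀ η ∈ Set.Ioc (0:ℝ) b, Φκ κ η ≤ C + C' := by
    rintro η ⟨hη0, hηb⟩
    have hη1 : η ≤ 1 := hηb.trans hb1
    have hκη0 : 0 < κ * η := mul_pos hκ0 hη0
    have hκη1 : κ * η ≤ 1 := by
      nlinarith [mul_le_mul_of_nonneg_left hηb hκ0.le]
    have ht := hΦtaylor (κ*η) ⟨hκη0.le, hκη1⟩
    rw [abs_le] at ht
    have h2 : (κ*η)^(k+δ) ≤ (κ*η)^k :=
      Real.rpow_le_rpow_of_exponent_ge hκη0 hκη1 (by linarith)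
    have h3 : Φ (κ*η) ≤ (C + C') * (κ*η)^k := by
      nlinarith [ht.2, mul_le_mul_of_nonneg_left h2 hC'.le]
    have hmul : (κ*η)^k = κ^k * η^k := Real.mul_rpow hκ0.le hη0.le
    have hηk : η^k ≤ 1 := Real.rpow_le_one hη0.le hη1 hk0.le
    have hηknn : 0 ≤ η^k := Real.rpow_nonneg hη0.le _
    have hκk : (0:ℝ) < κ^(-k) := Real.rpow_pos_of_pos hκ0 _
    have hinv : κ^(-k) * κ^k = 1 := by
      rw [← Real.rpow_add hκ0]
      simp
    rw [hΦκ κ hκ0 η]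
    calc κ^(-k) * Φ (κ*η) ≤ κ^(-k) * ((C+C') * (κ^k * η^k)) := by
          rw [← hmul]; exact mul_le_mul_of_nonneg_left h3 hκk.le
      _ = (C+C') * η^k * (κ^(-k) * κ^k) := by ring
      _ = (C+C') * η^k := by rw [hinv, mul_one]
      _ ≤ (C+C') * 1 := by nlinarith
      _ = C + C' := mul_one _
  have huIoc : Set.uIoc (0:ℝ) b = Set.Ioc (0:ℝ) b := Set.uIoc_of_le hb0
  have h12le : (3:ℝ) ^ ((1:ℝ)/2) ≤ (3:ℝ) ^ ((3:ℝ)/2) :=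
    Real.rpow_le_rpow_of_exponent_le (by norm_num) (by norm_num)
  -- bounds on the g-integral
  have hIgnn : 0 ≤ ∫ η in (0:ℝ)..b,
      Φκ κ η * (1 - κ*η)^2 * (2*(x-η) + κ * G κ x η) ^ ((1:ℝ)/2) := by
    apply intervalIntegral.integral_nonneg hb0
    intro η hη
    exact mul_nonneg (mul_nonneg (hΦκnn η) (sq_nonneg _))
      (Real.rpow_nonneg (hA0 η hη) _)
  have hIgle : (∫ η in (0:ℝ)..b,
      Φκ κ η * (1 - κ*η)^2 * (2*(x-η) + κ * G κ x η) ^ ((1:ℝ)/2)) ≤ M := by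
    have hnorm := intervalIntegral.norm_integral_le_of_norm_le_const
      (f := fun η => Φκ κ η * (1 - κ*η)^2 * (2*(x-η) + κ * G κ x η) ^ ((1:ℝ)/2))
      (C := M) (a := (0:ℝ)) (b := b) ?_
    · have : |b - 0| = b := by rw [sub_zero, abs_of_nonneg hb0]
      rw [this] at hnorm
      have h1 := (le_abs_self _).trans hnorm
      nlinarith
    · intro η hη
      rw [huIoc] at hη
      have hηIcc : η ∈ Set.Icc (0:ℝ) b := ⟨hη.1.le, hη.2⟩
      have hApow : (2*(x-η) + κ * G κ x η) ^ ((1:ℝ)/2) ≤ (3:ℝ) ^ ((1:ℝ)/2) :=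
        Real.rpow_le_rpow (hA0 η hηIcc) (hA3 η hηIcc) (by norm_num)
      have hApnn : 0 ≤ (2*(x-η) + κ * G κ x η) ^ ((1:ℝ)/2) :=
        Real.rpow_nonneg (hA0 η hηIcc) _
      have hnn : 0 ≤ Φκ κ η * (1 - κ*η)^2 * (2*(x-η) + κ * G κ x η) ^ ((1:ℝ)/2) :=
        mul_nonneg (mul_nonneg (hΦκnn η) (sq_nonneg _)) hApnn
      rw [Real.norm_eq_abs, abs_of_nonneg hnn]
      calc Φκ κ η * (1 - κ*η)^2 * (2*(x-η) + κ * G κ x η) ^ ((1:ℝ)/2)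
          ≤ (C + C') * 1 * (3:ℝ) ^ ((1:ℝ)/2) := by
            apply mul_le_mul _ hApow hApnn (by positivity)
            exact mul_le_mul (hΦb η hη) (hsq1 η hηIcc) (sq_nonneg _) hCC'.le
        _ ≤ (C + C') * (3:ℝ) ^ ((3:ℝ)/2) := by
            rw [mul_one]
            exact mul_le_mul_of_nonneg_left h12le hCC'.le
  -- bounds on the h-integral
  have hIhnn : 0 ≤ ∫ η in (0:ℝ)..b,
      Φκ κ η * (2*(x-η) + κ * G κ x η) ^ ((3:ℝ)/2) := by
    apply intervalIntegral.integral_nonneg hb0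
    intro η hη
    exact mul_nonneg (hΦκnn η) (Real.rpow_nonneg (hA0 η hη) _)
  have hIhle : (∫ η in (0:ℝ)..b,
      Φκ κ η * (2*(x-η) + κ * G κ x η) ^ ((3:ℝ)/2)) ≤ M := by
    have hnorm := intervalIntegral.norm_integral_le_of_norm_le_const
      (f := fun η => Φκ κ η * (2*(x-η) + κ * G κ x η) ^ ((3:ℝ)/2))
      (C := M) (a := (0:ℝ)) (b := b) ?_
    · have : |b - 0| = b := by rw [sub_zero, abs_of_nonneg hb0]
      rw [this] at hnorm
      have h1 := (le_abs_self _).trans hnorm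
      nlinarith
    · intro η hη
      rw [huIoc] at hη
      have hηIcc : η ∈ Set.Icc (0:ℝ) b := ⟨hη.1.le, hη.2⟩
      have hApow : (2*(x-η) + κ * G κ x η) ^ ((3:ℝ)/2) ≤ (3:ℝ) ^ ((3:ℝ)/2) :=
        Real.rpow_le_rpow (hA0 η hηIcc) (hA3 η hηIcc) (by norm_num)
      have hApnn : 0 ≤ (2*(x-η) + κ * G κ x η) ^ ((3:ℝ)/2) :=
        Real.rpow_nonneg (hA0 η hηIcc) _
      have hnn : 0 ≤ Φκ κ η * (2*(x-η) + κ * G κ x η) ^ ((3:ℝ)/2) :=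
        mul_nonneg (hΦκnn η) hApnn
      rw [Real.norm_eq_abs, abs_of_nonneg hnn]
      exact mul_le_mul (hΦb η hη) hApow hApnn hCC'.le
  have hπ := Real.pi_pos
  have hexp0 : (0:ℝ) < Real.exp (4*κ*x) := Real.exp_pos _
  have hge := hgκ κ hκ0 x hx0
  have hhe := hhκ κ hκ0 x hx0
  rw [← hbdef] at hge hhe
  constructor
  · rw [hge]; exact mul_nonneg (by positivity) hIgnn
  refine ⟨?_, ?_, ?_⟩
  · rw [hge, hC₁]
    have h1 : Real.exp (4*κ*x) * (∫ η in (0:ℝ)..b,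
        Φκ κ η * (1 - κ*η)^2 * (2*(x-η) + κ * G κ x η) ^ ((1:ℝ)/2)) ≤ Real.exp 4 * M := by
      apply mul_le_mul hexp4 hIgle hIgnn (Real.exp_pos _).le
    calc 4 * π * Real.exp (4*κ*x) * (∫ η in (0:ℝ)..b,
          Φκ κ η * (1 - κ*η)^2 * (2*(x-η) + κ * G κ x η) ^ ((1:ℝ)/2))
        = 4 * π * (Real.exp (4*κ*x) * (∫ η in (0:ℝ)..b,
          Φκ κ η * (1 - κ*η)^2 * (2*(x-η) + κ * G κ x η) ^ ((1:ℝ)/2))) := by ring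
      _ ≤ 4 * π * (Real.exp 4 * M) := mul_le_mul_of_nonneg_left h1 (by positivity)
      _ = 4 * π * Real.exp 4 * M := by ring
  · rw [hhe]; exact mul_nonneg (by positivity) hIhnn
  · rw [hhe, hC₁]
    have h1 : Real.exp (4*κ*x) * (∫ η in (0:ℝ)..b,
        Φκ κ η * (2*(x-η) + κ * G κ x η) ^ ((3:ℝ)/2)) ≤ Real.exp 4 * M := by
      apply mul_le_mul hexp4 hIhle hIhnn (Real.exp_pos _).le
    calc 4 * π / 3 * Real.exp (4*κ*x) * (∫ η in (0:ℝ)..b,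
          Φκ κ η * (2*(x-η) + κ * G κ x η) ^ ((3:ℝ)/2))
        = 4 * π / 3 * (Real.exp (4*κ*x) * (∫ η in (0:ℝ)..b,
          Φκ κ η * (2*(x-η) + κ * G κ x η) ^ ((3:ℝ)/2))) := by ring
      _ ≤ 4 * π / 3 * (Real.exp 4 * M) := mul_le_mul_of_nonneg_left h1 (by positivity)
      _ ≤ 4 * π * Real.exp 4 * M := by
          nlinarith [mul_nonneg hπ.le (mul_pos (Real.exp_pos 4) hM0).le]
end
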